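/- arXiv:1808.07033 — 3 statements merged into one kernel-verified Lean document; each statement's English description precedes it below -/
import Mathlib

section
/- Suppose that c ∈ (0,1] and that the Markovian coupling satisfies E_{x,y}[ρ(X',Y')] ≤ (1−c)·ρ(x,y) for all x,y ∈ S. Then for all probability measures μ, ν on S one has W_ρ(μp, νp) ≤ (1−c)·W_ρ(μ,ν). -/
open MeasureTheory ProbabilityTheory Set
open scoped ENNReal Classical

/-- The Kantorovich (L¹ Wasserstein) "distance" associated to a cost function `ρ`:
the infimum over all couplings `γ` of `μ` and `ν` of `∫ ρ dγ`. -/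
noncomputable def wassDist {S : Type*} [MeasurableSpace S] (ρ : S → S → ℝ)
    (μ ν : Measure S) : ℝ≥0∞ :=
  ⨅ (γ : Measure (S × S)) (_ : γ.map Prod.fst = μ ∧ γ.map Prod.snd = ν),
    ∫⁻ z, ENNReal.ofReal (ρ z.1 z.2) ∂γ

/-!
Given any coupling `γ` of `μ` and `ν`, run the Markovian coupling from each pair `z ∼ γ`: the
result is `q ∘ₘ γ`, where `q z` is the joint law of `(X', Y')` under `P z`. Its marginals are
`μp` and `νp`, and integrating the one-step contraction `∫ ρ dq(z) ≤ (1 - c) ρ(z)` against `γ`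
gives `∫ ρ d(q ∘ₘ γ) ≤ (1 - c) ∫ ρ dγ`. Taking the infimum over `γ` proves the claim.
-/

lemma MeasureTheory.Measure.map_comp_of_map_apply {α β γ δ : Type*} [MeasurableSpace α]
    [MeasurableSpace β] [MeasurableSpace γ] [MeasurableSpace δ] (μ : Measure α)
    {κ : Kernel α β} {η : Kernel γ δ} {f : β → δ} {g : α → γ} (hf : Measurable f)
    (hg : Measurable g) (h : ∀ a, (κ a).map f = η (g a)) :
    (κ ∘ₘ μ).map f = η ∘ₘ μ.map g := by
  have hκ : κ.map f = η.comap g hg := by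
    ext1 a
    rw [Kernel.map_apply _ hf, h, Kernel.comap_apply]
  rw [Measure.map_comp μ κ hf, hκ, ← Kernel.comp_deterministic_eq_comap, ← Measure.comp_assoc,
    Measure.deterministic_comp_eq_map]

section wassDist

variable {S : Type*} [MeasurableSpace S] {ρ : S → S → ℝ} {μ ν : Measure S}

lemma wassDist_le_lintegral {γ : Measure (S × S)} (h₁ : γ.map Prod.fst = μ)
    (h₂ : γ.map Prod.snd = ν) : wassDist ρ μ ν ≤ ∫⁻ z, ENNReal.ofReal (ρ z.1 z.2) ∂γ :=
  iInf₂_le γ ⟨h₁, h₂⟩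

lemma le_mul_wassDist [IsProbabilityMeasure μ] [IsProbabilityMeasure ν] {w k : ℝ≥0∞}
    (hk : k ≠ ∞) (h : ∀ γ : Measure (S × S), γ.map Prod.fst = μ → γ.map Prod.snd = ν →
      w ≤ k * ∫⁻ z, ENNReal.ofReal (ρ z.1 z.2) ∂γ) :
    w ≤ k * wassDist ρ μ ν := by
  have : Nonempty {γ : Measure (S × S) // γ.map Prod.fst = μ ∧ γ.map Prod.snd = ν} :=
    ⟨⟨μ.prod ν, by simp, by simp⟩⟩
  rw [wassDist, iInf_subtype', ENNReal.mul_iInf fun hk' => absurd hk' hk]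
  exact le_iInf fun γ => h γ γ.2.1 γ.2.2

theorem wassDist_comp_le_of_coupling {p : Kernel S S} {q : Kernel (S × S) (S × S)}
    (hq₁ : ∀ z, (q z).map Prod.fst = p z.1) (hq₂ : ∀ z, (q z).map Prod.snd = p z.2)
    (hρ : Measurable fun z : S × S => ρ z.1 z.2) {k : ℝ≥0∞} (hk : k ≠ ∞)
    (hcontr : ∀ z, ∫⁻ w, ENNReal.ofReal (ρ w.1 w.2) ∂(q z) ≤ k * ENNReal.ofReal (ρ z.1 z.2))
    [IsProbabilityMeasure μ] [IsProbabilityMeasure ν] :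
    wassDist ρ (p ∘ₘ μ) (p ∘ₘ ν) ≤ k * wassDist ρ μ ν := by
  refine le_mul_wassDist hk fun γ h₁ h₂ => ?_
  calc wassDist ρ (p ∘ₘ μ) (p ∘ₘ ν)
      ≤ ∫⁻ z, ENNReal.ofReal (ρ z.1 z.2) ∂(q ∘ₘ γ) := by
        refine wassDist_le_lintegral ?_ ?_
        · rw [Measure.map_comp_of_map_apply γ measurable_fst measurable_fst hq₁, h₁]
        · rw [Measure.map_comp_of_map_apply γ measurable_snd measurable_snd hq₂, h₂]
    _ = ∫⁻ z, ∫⁻ w, ENNReal.ofReal (ρ w.1 w.2) ∂(q z) ∂γ :=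
        Measure.lintegral_bind q.aemeasurable hρ.ennreal_ofReal.aemeasurable
    _ ≤ ∫⁻ z, k * ENNReal.ofReal (ρ z.1 z.2) ∂γ := lintegral_mono hcontr
    _ = k * ∫⁻ z, ENNReal.ofReal (ρ z.1 z.2) ∂γ := lintegral_const_mul _ hρ.ennreal_ofReal

end wassDist

noncomputable def distCost {S : Type*} [MetricSpace S] (f₀ : ℝ → ℝ) (a δ : ℝ) (V : S → ℝ)
    (x y : S) : ℝ :=
  f₀ (dist x y) + if x = y then 0 else a + δ * V x + δ * V y

lemma measurable_distCost {S : Type*} [MetricSpace S] [MeasurableSpace S] [BorelSpace S]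
    [SecondCountableTopology S] {f₀ : ℝ → ℝ} (hf₀ : ContinuousOn f₀ (Ici 0)) (a δ : ℝ)
    {V : S → ℝ} (hV : Measurable V) :
    Measurable fun z : S × S => distCost f₀ a δ V z.1 z.2 := by
  have hdist : Continuous fun z : S × S => f₀ (dist z.1 z.2) :=
    hf₀.comp_continuous continuous_dist fun _ => dist_nonneg
  exact hdist.measurable.add <| Measurable.ite (measurableSet_eq_fun measurable_fst measurable_snd)
    measurable_const (by fun_prop)

theorem stmt0_general {S Ω : Type*} [MetricSpace S] [MeasurableSpace S] [BorelSpace S]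
    [TopologicalSpace.SeparableSpace S] [MeasurableSpace Ω]
    -- the Markov transition kernel
    (p : Kernel S S)
    -- the Markovian coupling of the transition probabilities
    (X' Y' : Ω → S) (hX' : Measurable X') (hY' : Measurable Y')
    (P : Kernel (S × S) Ω)
    (hmargX : ∀ x y : S, (P (x, y)).map X' = p x)
    (hmargY : ∀ x y : S, (P (x, y)).map Y' = p y)
    -- the distance function ρ
    (f₀ : ℝ → ℝ) (hf₀cont : ContinuousOn f₀ (Ici 0))
    (a δ : ℝ)
    (V : S → ℝ) (hV : Measurable V)
    (ρ : S → S → ℝ)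
    (hρ : ∀ x y : S, ρ x y = f₀ (dist x y) + (if x = y then 0 else a + δ * V x + δ * V y))
    -- contraction of the coupling
    (c : ℝ) (hc : c ∈ Ioc (0:ℝ) 1)
    (hcontr : ∀ x y : S,
      ∫⁻ ω, ENNReal.ofReal (ρ (X' ω) (Y' ω)) ∂(P (x, y))
        ≤ ENNReal.ofReal ((1 - c) * ρ x y)) :
    ∀ μ ν : Measure S, IsProbabilityMeasure μ → IsProbabilityMeasure ν →
      wassDist ρ (μ.bind fun x => p x) (ν.bind fun x => p x)
        ≤ ENNReal.ofReal (1 - c) * wassDist ρ μ ν := by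
  intro μ ν _ _
  have : SecondCountableTopology S := UniformSpace.secondCountable_of_separable S
  obtain rfl : ρ = distCost f₀ a δ V := funext₂ hρ
  have hXY : Measurable fun ω => (X' ω, Y' ω) := hX'.prodMk hY'
  have hq (z : S × S) : (P.map fun ω => (X' ω, Y' ω)) z = (P z).map fun ω => (X' ω, Y' ω) :=
    Kernel.map_apply P hXY z
  refine wassDist_comp_le_of_coupling (q := P.map fun ω => (X' ω, Y' ω)) (fun z => ?_)
    (fun z => ?_) (measurable_distCost hf₀cont a δ hV) ENNReal.ofReal_ne_top (fun z => ?_)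
  · rw [hq, Measure.map_map measurable_fst hXY]
    exact hmargX z.1 z.2
  · rw [hq, Measure.map_map measurable_snd hXY]
    exact hmargY z.1 z.2
  · rw [hq, lintegral_map (measurable_distCost hf₀cont a δ hV).ennreal_ofReal hXY,
      ← ENNReal.ofReal_mul (sub_nonneg.2 hc.2)]
    exact hcontr z.1 z.2

/-- if the Markovian coupling contracts `ρ` with rate `c ∈ (0,1]`, then the
transition kernel `p` contracts the Kantorovich distance `W_ρ` with the same rate. -/
theorem stmt0 {S Ω : Type*} [MetricSpace S] [MeasurableSpace S] [BorelSpace S]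
    [TopologicalSpace.SeparableSpace S] [MeasurableSpace Ω]
    -- the Markov transition kernel
    (p : Kernel S S) [IsMarkovKernel p]
    -- the Markovian coupling of the transition probabilities
    (X' Y' : Ω → S) (hX' : Measurable X') (hY' : Measurable Y')
    (P : Kernel (S × S) Ω) [IsMarkovKernel P]
    (hmargX : ∀ x y : S, (P (x, y)).map X' = p x)
    (hmargY : ∀ x y : S, (P (x, y)).map Y' = p y)
    -- the distance function ρ
    (f₀ : ℝ → ℝ) (hf₀cont : ContinuousOn f₀ (Ici 0)) (hf₀conc : ConcaveOn ℝ (Ici 0) f₀)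
    (hf₀mono : MonotoneOn f₀ (Ici 0)) (hf₀zero : f₀ 0 = 0) (hf₀pos : ∀ r > (0:ℝ), 0 < f₀ r)
    (a δ : ℝ) (ha : 0 ≤ a) (hδ : 0 ≤ δ)
    (V : S → ℝ) (hV : Measurable V) (hVnonneg : ∀ x, 0 ≤ V x)
    (ρ : S → S → ℝ)
    (hρ : ∀ x y : S, ρ x y = f₀ (dist x y) + (if x = y then 0 else a + δ * V x + δ * V y))
    -- contraction of the coupling
    (c : ℝ) (hc : c ∈ Ioc (0:ℝ) 1)
    (hcontr : ∀ x y : S,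
      ∫⁻ ω, ENNReal.ofReal (ρ (X' ω) (Y' ω)) ∂(P (x, y))
        ≤ ENNReal.ofReal ((1 - c) * ρ x y)) :
    ∀ μ ν : Measure S, IsProbabilityMeasure μ → IsProbabilityMeasure ν →
      wassDist ρ (μ.bind fun x => p x) (ν.bind fun x => p x)
        ≤ ENNReal.ofReal (1 - c) * wassDist ρ μ ν :=
  stmt0_general p X' Y' hX' hY' P hmargX hmargY f₀ hf₀cont a δ V hV ρ hρ c hc hcontr
end

section
/- Let f = a·1_{(0,∞)} + f₀ where a ≥ 0 and f₀ : [0,∞) → [0,∞) is concave, nondecreasing, Lipschitz, twice continuously differentiable on (0,∞) with f₀(0) = 0. Then for all x, y ∈ S with x ≠ y and r = d(x,y), assuming E_{x,y}[R'] < ∞, one has E_{x,y}[f(R')] − f(r) ≤ −a·π(x,y) + β(x,y)·f₀'(r) + (1/2)·α(x,y)·sup_{u∈((r−ε)⁺, r)} f₀''(u). -/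
open MeasureTheory ProbabilityTheory Set
open scoped ENNReal Classical

noncomputable section

variable {S Ω : Type*} [MetricSpace S] [MeasurableSpace S] [BorelSpace S] [MeasurableSpace Ω]

/-- `β(x,y) = E_{x,y}[ΔR]`, the expected change of the distance under the coupling. -/
def betaC (P : Kernel (S × S) Ω) (X' Y' : Ω → S) (x y : S) : ℝ :=
  ∫ ω, (dist (X' ω) (Y' ω) - dist x y) ∂(P (x, y))

/-- `α(x,y) = E_{x,y}[((ΔR)⁻ ∧ ε)²]`. -/
def alphaC (P : Kernel (S × S) Ω) (X' Y' : Ω → S) (ε : ℝ) (x y : S) : ℝ :=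
  ∫ ω, (min (max (dist x y - dist (X' ω) (Y' ω)) 0) ε) ^ 2 ∂(P (x, y))

/-- `π(x,y) = P_{x,y}[R' = 0]`, the coupling probability. -/
def piC (P : Kernel (S × S) Ω) (X' Y' : Ω → S) (x y : S) : ℝ :=
  ((P (x, y)) {ω | X' ω = Y' ω}).toReal

/-!
Both sides are affine in the jump part: after subtracting `a + f₀ r`, it contributes exactly
`-a · P[R' = 0]`, so it suffices to bound `f₀ R' - f₀ r` pointwise and integrate.
For `R' ≥ r` this is the tangent-line inequality of the concave `f₀` at `r`. For `R' < r` let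
`u = max R' (r - ε)`, so that `r - u = (ΔR)⁻ ∧ ε`: concavity gives
`f₀ R' - f₀ u ≤ (R' - u) f₀'(r)`, and a second-order Taylor bound on `[u, r]`, where
`f₀'' ≤ sup_{((r-ε)⁺, r)} f₀''`, gives
`f₀ u - f₀ r ≤ (u - r) f₀'(r) + ½ (r - u)² sup f₀''`.
-/

namespace ConcaveOn

variable {f : ℝ → ℝ} {s : Set ℝ} {r t u : ℝ}

theorem sub_le_mul_deriv (hf : ConcaveOn ℝ s f) (ht : t ∈ s) (hr : r ∈ s)
    (hd : DifferentiableAt ℝ f r) : f t - f r ≤ (t - r) * deriv f r := by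
  rcases lt_trichotomy t r with htr | rfl | hrt
  · have h := hf.deriv_le_slope ht hr htr hd
    rw [slope_def_field, le_div_iff₀ (sub_pos.2 htr)] at h
    linarith
  · simp
  · have h := hf.slope_le_deriv hr ht hrt hd
    rwa [slope_def_field, div_le_iff₀ (sub_pos.2 hrt), mul_comm] at h

theorem sub_le_mul_deriv_of_le (hf : ConcaveOn ℝ s f) (ht : t ∈ s) (hr : r ∈ s)
    (htu : t ≤ u) (hur : u ≤ r) (hd : DifferentiableAt ℝ f r) :
    f t - f u ≤ (t - u) * deriv f r := by
  rcases htu.eq_or_lt with rfl | htu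
  · simp
  rcases hur.eq_or_lt with rfl | hur
  · exact hf.sub_le_mul_deriv ht hr hd
  have hu : u ∈ s := hf.1.ordConnected.out ht hr ⟨htu.le, hur.le⟩
  have h := hf.deriv_le_slope hu hr hur hd
  rw [slope_def_field] at h
  have h' := h.trans (hf.slope_anti_adjacent ht hr htu hur)
  rw [le_div_iff₀ (sub_pos.2 htu)] at h'
  linarith

theorem deriv2_nonpos (hf : ConcaveOn ℝ s f) (hs : IsOpen s) (hd : DifferentiableOn ℝ f s)
    (hr : r ∈ s) : deriv (deriv f) r ≤ 0 := by
  rw [← derivWithin_of_isOpen hs hr]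
  exact (hf.antitoneOn_deriv fun x hx ↦ hd.differentiableAt (hs.mem_nhds hx)).derivWithin_nonpos

end ConcaveOn

theorem sub_le_mul_deriv_add_of_deriv2_le {f : ℝ → ℝ} {u r M : ℝ} (hur : u ≤ r)
    (hfc : ContinuousOn f (Icc u r)) (hf : ContDiffOn ℝ 2 f (Ioi u))
    (hM : ∀ v ∈ Ioo u r, deriv (deriv f) v ≤ M) :
    f u - f r ≤ (u - r) * deriv f r + 1 / 2 * (r - u) ^ 2 * M := by
  set D := deriv f r
  have hd : DifferentiableOn ℝ f (Ioi u) := hf.differentiableOn two_ne_zero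
  have hd' : DifferentiableOn ℝ (deriv f) (Ioi u) :=
    (hf.deriv_of_isOpen isOpen_Ioi (by norm_num) : ContDiffOn ℝ 1 _ _).differentiableOn
      one_ne_zero
  have hq : ∀ v, HasDerivAt (fun v ↦ (v - r) * D + 1 / 2 * (r - v) ^ 2 * M)
      (D - (r - v) * M) v := fun v ↦ ((((hasDerivAt_id' v).sub_const r).mul_const D).add
      ((((hasDerivAt_id' v).const_sub r).pow 2).const_mul (1 / 2 : ℝ) |>.mul_const M)).congr_deriv
        (by ring)
  set φ : ℝ → ℝ := fun v ↦ f v - ((v - r) * D + 1 / 2 * (r - v) ^ 2 * M)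
  have hφ : ∀ v ∈ Ioo u r, HasDerivAt φ (deriv f v - (D - (r - v) * M)) v := fun v hv ↦
    (hd.differentiableAt (isOpen_Ioi.mem_nhds hv.1)).hasDerivAt.sub (hq v)
  have hφ_mono : MonotoneOn φ (Icc u r) := by
    refine monotoneOn_of_deriv_nonneg (convex_Icc u r) ?_ ?_ ?_
    · exact hfc.sub fun v _ ↦ (hq v).continuousAt.continuousWithinAt
    · rw [interior_Icc]
      exact fun v hv ↦ (hφ v hv).differentiableAt.differentiableWithinAt
    · rw [interior_Icc]
      intro v hv
      rw [(hφ v hv).deriv, sub_nonneg]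
      have hsub : Icc v r ⊆ Ioi u := fun w hw ↦ hv.1.trans_le hw.1
      have := (convex_Icc v r).image_sub_le_mul_sub_of_deriv_le (hd'.continuousOn.mono hsub)
        (hd'.mono (interior_subset.trans hsub))
        (by rw [interior_Icc]; exact fun w hw ↦ hM w ⟨hv.1.trans hw.1, hw.2⟩)
        v (left_mem_Icc.2 hv.2.le) r (right_mem_Icc.2 hv.2.le) hv.2.le
      linarith
  have := hφ_mono ⟨le_rfl, hur⟩ ⟨hur, le_rfl⟩ hur
  simp only [φ, sub_self] at this
  linarith

theorem ConcaveOn.sub_le_mul_deriv_add_sSup_deriv2 {f : ℝ → ℝ} {ε r t : ℝ}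
    (hf : ConcaveOn ℝ (Ici 0) f) (hfc : ContinuousOn f (Ici 0)) (hf2 : ContDiffOn ℝ 2 f (Ioi 0))
    (hε : 0 < ε) (hr : 0 < r) (ht : 0 ≤ t) :
    f t - f r ≤ (t - r) * deriv f r
      + 1 / 2 * min (max (r - t) 0) ε ^ 2
        * sSup (deriv (deriv f) '' Ioo (max (r - ε) 0) r) := by
  set M := sSup (deriv (deriv f) '' Ioo (max (r - ε) 0) r)
  have hd : DifferentiableOn ℝ f (Ioi 0) := hf2.differentiableOn two_ne_zero
  have hdr : DifferentiableAt ℝ f r := hd.differentiableAt (isOpen_Ioi.mem_nhds hr)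
  have hM : ∀ v ∈ Ioo (max (r - ε) 0) r, deriv (deriv f) v ≤ M := by
    refine fun v hv ↦ le_csSup ⟨0, ?_⟩ (mem_image_of_mem _ hv)
    rintro _ ⟨w, hw, rfl⟩
    exact (hf.subset Ioi_subset_Ici_self (convex_Ioi 0)).deriv2_nonpos isOpen_Ioi hd
      ((le_max_right _ _).trans_lt hw.1)
  rcases le_or_gt r t with hrt | htr
  · rw [max_eq_right (by linarith), min_eq_left hε.le]
    simpa using hf.sub_le_mul_deriv ht hr.le hdr
  set u := max t (r - ε)
  have hq : min (max (r - t) 0) ε = r - u := by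
    rw [max_eq_left (by linarith), ← min_sub_sub_left, sub_sub_cancel]
  have hconc := hf.sub_le_mul_deriv_of_le ht (mem_Ici.2 hr.le) (le_max_left t (r - ε))
    (max_le htr.le (by linarith)) hdr
  have hu : 0 ≤ u := ht.trans (le_max_left _ _)
  have hAu : max (r - ε) 0 ≤ u := max_le (le_max_right _ _) hu
  have htaylor := sub_le_mul_deriv_add_of_deriv2_le (max_le htr.le (by linarith : r - ε ≤ r))
    (hfc.mono fun v hv ↦ hu.trans hv.1) (hf2.mono fun v hv ↦ hu.trans_lt hv)
    (fun v hv ↦ hM v ⟨hAu.trans_lt hv.1, hv.2⟩)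
  rw [hq]
  linarith

section Integral

variable {μ : Measure Ω} {R : Ω → ℝ}

theorem LipschitzOnWith.integrable_comp_of_nonneg [IsFiniteMeasure μ] {K : NNReal}
    {f : ℝ → ℝ} (hf : LipschitzOnWith K f (Ici 0)) (hR : Integrable R μ) (hR0 : ∀ ω, 0 ≤ R ω) :
    Integrable (fun ω ↦ f (R ω)) μ := by
  obtain ⟨g, hg, hfg⟩ := hf.extend_real
  refine Integrable.mono' ((integrable_const ‖f 0‖).add (hR.norm.const_mul K))
    ((hg.continuous.comp_aestronglyMeasurable hR.1).congr
      (ae_of_all _ fun ω ↦ (hfg (hR0 ω)).symm)) (ae_of_all _ fun ω ↦ ?_)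
  have := hf.norm_sub_le (mem_Ici.2 (hR0 ω)) (mem_Ici.2 le_rfl)
  rw [sub_zero] at this
  show ‖f (R ω)‖ ≤ ‖f 0‖ + K * ‖R ω‖
  linarith [norm_le_norm_add_norm_sub' (f (R ω)) (f 0)]

theorem integral_ite_eq_zero [IsProbabilityMeasure μ] (hR : AEMeasurable R μ) (a : ℝ) :
    ∫ ω, (if R ω = 0 then 0 else a) ∂μ = a - a * μ.real {ω | R ω = 0} := by
  have hs : NullMeasurableSet {ω | R ω = 0} μ :=
    hR.nullMeasurableSet_preimage (measurableSet_singleton 0)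
  have : (fun ω ↦ if R ω = 0 then 0 else a)
      = fun ω ↦ a - {ω | R ω = 0}.indicator (fun _ ↦ a) ω := by
    ext ω
    by_cases h : R ω = 0 <;> simp [h]
  rw [this, integral_sub (integrable_const a) ((integrable_const a).indicator₀ hs),
    integral_indicator₀ hs, setIntegral_const, integral_const]
  simp [mul_comm]

theorem integrable_ite_eq_zero [IsFiniteMeasure μ] (hR : AEMeasurable R μ) (a : ℝ) :
    Integrable (fun ω ↦ if R ω = 0 then 0 else a) μ := by
  have hm : Measurable fun t : ℝ ↦ if t = 0 then 0 else a :=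
    measurable_const.ite (measurableSet_singleton 0) measurable_const
  exact .of_bound (hm.comp_aemeasurable hR).aestronglyMeasurable |a|
    (ae_of_all _ fun ω ↦ by split_ifs <;> simp)

theorem integral_comp_sub_le_of_concaveOn [IsProbabilityMeasure μ] (hR : Integrable R μ)
    (hR0 : ∀ ω, 0 ≤ R ω) {f : ℝ → ℝ} {K : NNReal} (hf : ConcaveOn ℝ (Ici 0) f)
    (hlip : LipschitzOnWith K f (Ici 0)) (hf2 : ContDiffOn ℝ 2 f (Ioi 0)) {ε r : ℝ}
    (hε : 0 < ε) (hr : 0 < r) :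
    ∫ ω, f (R ω) ∂μ - f r ≤ (∫ ω, (R ω - r) ∂μ) * deriv f r
      + 1 / 2 * (∫ ω, (min (max (r - R ω) 0) ε) ^ 2 ∂μ)
        * sSup (deriv (deriv f) '' Ioo (max (r - ε) 0) r) := by
  set M := sSup (deriv (deriv f) '' Ioo (max (r - ε) 0) r)
  have hsq : Integrable (fun ω ↦ (min (max (r - R ω) 0) ε) ^ 2) μ := by
    refine .of_mem_Icc 0 (ε ^ 2) (by fun_prop) (ae_of_all _ fun ω ↦ ⟨sq_nonneg _, ?_⟩)
    exact pow_le_pow_left₀ (le_min (le_max_right _ _) hε.le) (min_le_right _ _) 2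
  have hlin : Integrable (fun ω ↦ (R ω - r) * deriv f r) μ :=
    (hR.sub (integrable_const r)).mul_const _
  have haff : Integrable (fun ω ↦ f r + (R ω - r) * deriv f r) μ :=
    (integrable_const _).fun_add hlin
  have hquad : Integrable (fun ω ↦ 1 / 2 * (min (max (r - R ω) 0) ε) ^ 2 * M) μ :=
    (hsq.const_mul _).mul_const _
  have := integral_mono (hlip.integrable_comp_of_nonneg hR hR0) (haff.fun_add hquad) fun ω ↦ by
    have := hf.sub_le_mul_deriv_add_sSup_deriv2 hlip.continuousOn hf2 hε hr (hR0 ω)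
    linarith
  rw [integral_add haff hquad, integral_add (integrable_const _) hlin, integral_const,
    integral_mul_const, integral_mul_const, integral_const_mul] at this
  simp only [probReal_univ, one_smul] at this
  linarith

end Integral

theorem stmt5_general
    (X' Y' : Ω → S)
    (P : Kernel (S × S) Ω) [IsMarkovKernel P]
    (ε : ℝ) (hε : 0 < ε)
    (a : ℝ)
    (f₀ : ℝ → ℝ) (hf₀conc : ConcaveOn ℝ (Ici 0) f₀)
    (Lf : NNReal) (hf₀lip : LipschitzOnWith Lf f₀ (Ici 0))
    (hf₀smooth : ContDiffOn ℝ 2 f₀ (Ioi 0))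
    (x y : S) (hxy : x ≠ y)
    -- E_{x,y}[R'] < ∞
    (hint : Integrable (fun ω => dist (X' ω) (Y' ω)) (P (x, y))) :
    (∫ ω, ((if X' ω = Y' ω then 0 else a) + f₀ (dist (X' ω) (Y' ω))) ∂(P (x, y)))
        - (a + f₀ (dist x y))
      ≤ -a * piC P X' Y' x y + betaC P X' Y' x y * deriv f₀ (dist x y)
        + 1 / 2 * alphaC P X' Y' ε x y
          * sSup (deriv (deriv f₀) '' Ioo (max (dist x y - ε) 0) (dist x y)) := by
  have hR0 : ∀ ω, 0 ≤ dist (X' ω) (Y' ω) := fun _ ↦ dist_nonneg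
  have hjump_int := integrable_ite_eq_zero hint.aemeasurable a
  have hjump := integral_ite_eq_zero hint.aemeasurable a
  simp only [dist_eq_zero] at hjump_int hjump
  have hf₀ := integral_comp_sub_le_of_concaveOn hint hR0 hf₀conc hf₀lip hf₀smooth hε
    (dist_pos.2 hxy)
  rw [integral_add hjump_int (hf₀lip.integrable_comp_of_nonneg hint hR0), hjump]
  unfold piC betaC alphaC
  rw [← measureReal_def]
  linarith

/-- basic estimate (7*): for `f = a·1_{(0,∞)} + f₀` with `f₀` concave,
nondecreasing, Lipschitz and C² on `(0,∞)`,
`E_{x,y}[f(R')] − f(r) ≤ −a·π(x,y) + β(x,y)·f₀'(r) + (1/2)·α(x,y)·sup_{((r−ε)⁺,r)} f₀''`. -/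
theorem stmt5
    (p : Kernel S S) [IsMarkovKernel p]
    (X' Y' : Ω → S) (hX' : Measurable X') (hY' : Measurable Y')
    (P : Kernel (S × S) Ω) [IsMarkovKernel P]
    (hmargX : ∀ x y : S, (P (x, y)).map X' = p x)
    (hmargY : ∀ x y : S, (P (x, y)).map Y' = p y)
    (ε : ℝ) (hε : 0 < ε)
    (a : ℝ) (ha : 0 ≤ a)
    (f₀ : ℝ → ℝ) (hf₀conc : ConcaveOn ℝ (Ici 0) f₀) (hf₀mono : MonotoneOn f₀ (Ici 0))
    (Lf : NNReal) (hf₀lip : LipschitzOnWith Lf f₀ (Ici 0))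
    (hf₀smooth : ContDiffOn ℝ 2 f₀ (Ioi 0)) (hf₀0 : f₀ 0 = 0)
    (x y : S) (hxy : x ≠ y)
    -- E_{x,y}[R'] < ∞
    (hint : Integrable (fun ω => dist (X' ω) (Y' ω)) (P (x, y))) :
    (∫ ω, ((if X' ω = Y' ω then 0 else a) + f₀ (dist (X' ω) (Y' ω))) ∂(P (x, y)))
        - (a + f₀ (dist x y))
      ≤ -a * piC P X' Y' x y + betaC P X' Y' x y * deriv f₀ (dist x y)
        + 1 / 2 * alphaC P X' Y' ε x y
          * sSup (deriv (deriv f₀) '' Ioo (max (dist x y - ε) 0) (dist x y)) :=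
  stmt5_general X' Y' P ε hε a f₀ hf₀conc Lf hf₀lip hf₀smooth x y hxy hint

end
end

section
/- There exists a universal constant p₀ ∈ (0,1) with p₀ ≥ 0.15 (one may take p₀ = ∫₁^∞ φ_{0,1}(t)dt, where φ_{0,1} is the standard normal density) such that for the coupling of Euler transition steps, π(x,y) ≥ p₀ whenever r̂ ≤ 2√h, for all x, y ∈ ℝ^d, every dimension d ≥ 1, every step size h > 0 and every measurable drift b. -/
open MeasureTheory ProbabilityTheory Set
open scoped ENNReal Classical RealInnerProductSpace

noncomputable section

/-- Euclidean state space `ℝ^d`. -/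
abbrev Ed (d : ℕ) := EuclideanSpace ℝ (Fin d)

/-- The standard Gaussian measure `N(0, I_d)` on `ℝ^d`. -/
def stdGaussian (d : ℕ) : Measure (Ed d) :=
  (Measure.pi fun _ : Fin d => gaussianReal 0 1).map
    (MeasurableEquiv.toLp 2 (Fin d → ℝ))

/-- The uniform distribution on the unit interval. -/
def unif01 : Measure ℝ := volume.restrict (Set.Ioc (0:ℝ) 1)

variable {d : ℕ}

/-- The deterministic part of the Euler step: `x̂ = x + h·b(x)`. -/
def hatPt (h : ℝ) (b : Ed d → Ed d) (x : Ed d) : Ed d := x + h • b x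

/-- Density ratio `φ_{ŷ,hI}(w) / φ_{x̂,hI}(w)` of the Gaussian transition densities. -/
def densRatio (h : ℝ) (xh yh w : Ed d) : ℝ :=
  Real.exp ((‖w - xh‖ ^ 2 - ‖w - yh‖ ^ 2) / (2 * h))

/-- The reflected point `Y'_refl = ŷ + √h (I − 2êêᵀ) z`, where `ê` is the unit vector in
direction `x̂ − ŷ` (and `ê = 0` if `x̂ = ŷ`). -/
def reflPt (h : ℝ) (xh yh z : Ed d) : Ed d :=
  yh + Real.sqrt h •
    (z - (2 * ⟪‖xh - yh‖⁻¹ • (xh - yh), z⟫) • (‖xh - yh‖⁻¹ • (xh - yh)))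

/-- The coupling map: given the noise `z` and the uniform variable `u`, it returns
`X' = x̂ + √h z` and `Y' = X'` if `u ≤ φ_{ŷ,hI}(X')/φ_{x̂,hI}(X')`, `Y' = Y'_refl`
otherwise. -/
def cplMap (h : ℝ) (b : Ed d → Ed d) (x y : Ed d) (zu : Ed d × ℝ) : Ed d × Ed d :=
  (hatPt h b x + Real.sqrt h • zu.1,
    if zu.2 ≤ densRatio h (hatPt h b x) (hatPt h b y) (hatPt h b x + Real.sqrt h • zu.1)
    then hatPt h b x + Real.sqrt h • zu.1
    else reflPt h (hatPt h b x) (hatPt h b y) zu.1)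

/-- The law of the coupled pair `(X', Y')` of Euler transition steps from `x` and `y`. -/
def cplMeasure (h : ℝ) (b : Ed d → Ed d) (x y : Ed d) : Measure (Ed d × Ed d) :=
  ((stdGaussian d).prod unif01).map (cplMap h b x y)

/-- `β(x,y) = E_{x,y}[R' − r]`. -/
def betaE (h : ℝ) (b : Ed d → Ed d) (x y : Ed d) : ℝ :=
  ∫ w, (‖w.1 - w.2‖ - ‖x - y‖) ∂(cplMeasure h b x y)

/-- `β̂(x,y) = E_{x,y}[R' − r̂]`. -/
def betaHat (h : ℝ) (b : Ed d → Ed d) (x y : Ed d) : ℝ :=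
  ∫ w, (‖w.1 - w.2‖ - ‖hatPt h b x - hatPt h b y‖) ∂(cplMeasure h b x y)

/-- `u(s) = √h·1_{s<√h}`. -/
def uFun (h s : ℝ) : ℝ := if s < Real.sqrt h then Real.sqrt h else 0

/-- `l(s) = √h·1_{s≥√h}`. -/
def lFun (h s : ℝ) : ℝ := if s < Real.sqrt h then 0 else Real.sqrt h

/-- `α(x,y) = E_{x,y}[(((R'−r) ∧ u(r)) ∨ (−l(r)))²]`. -/
def alphaE (h : ℝ) (b : Ed d → Ed d) (x y : Ed d) : ℝ :=
  ∫ w, (max (min (‖w.1 - w.2‖ - ‖x - y‖) (uFun h ‖x - y‖)) (-(lFun h ‖x - y‖))) ^ 2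
    ∂(cplMeasure h b x y)

/-- `α̂(x,y) = E_{x,y}[(((R'−r̂) ∧ u(r̂)) ∨ (−l(r̂)))²]`. -/
def alphaHat (h : ℝ) (b : Ed d → Ed d) (x y : Ed d) : ℝ :=
  ∫ w, (max (min (‖w.1 - w.2‖ - ‖hatPt h b x - hatPt h b y‖)
      (uFun h ‖hatPt h b x - hatPt h b y‖)) (-(lFun h ‖hatPt h b x - hatPt h b y‖))) ^ 2
    ∂(cplMeasure h b x y)

/-- `π(x,y) = P_{x,y}[R' = 0] = P_{x,y}[X' = Y']`. -/
def piE (h : ℝ) (b : Ed d → Ed d) (x y : Ed d) : ℝ :=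
  ((cplMeasure h b x y) {w | w.1 = w.2}).toReal

/-- (C1) one-sided Lipschitz condition. -/
def CondC1 (b : Ed d → Ed d) (J : ℝ) : Prop :=
  ∀ x y : Ed d, ⟪x - y, b x - b y⟫ ≤ J * ‖x - y‖ ^ 2

/-- (C2) strict contractivity outside a ball of radius `𝓡`. -/
def CondC2 (b : Ed d → Ed d) (K 𝓡 : ℝ) : Prop :=
  ∀ x y : Ed d, 𝓡 ≤ ‖x - y‖ → ⟪x - y, b x - b y⟫ ≤ -K * ‖x - y‖ ^ 2

/-- (C3) global Lipschitz condition. -/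
def CondC3 (b : Ed d → Ed d) (L : ℝ) : Prop :=
  ∀ x y : Ed d, ‖b x - b y‖ ≤ L * ‖x - y‖

/-- Standard normal density `φ_{0,1}`. -/
def stdNormalPdf (t : ℝ) : ℝ := (Real.sqrt (2 * Real.pi))⁻¹ * Real.exp (-(t ^ 2) / 2)

/-!
The coupling succeeds (`Y' = X'`) whenever `U ≤ φ_{ŷ,hI}(X') / φ_{x̂,hI}(X')`. With
`X' = x̂ + √h Z` and `v = x̂ - ŷ`, the logarithm of this ratio is `-(|v|² + 2√h ⟪v, Z⟫) / (2h)`,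
which is nonnegative on the half-space `⟪v, Z⟫ ≤ -|v|` as soon as `|v| ≤ 2√h`; there the ratio is
at least `1 ≥ U`. As `⟪v / |v|, Z⟫` is standard normal, this half-space has probability
`∫₁^∞ φ_{0,1} = p₀`. The numerical bound comes from `p₀ = 1/2 - ∫₀¹ φ_{0,1}` and
`e^{-x} ≤ 1 - x + x²/2` for `x ≥ 0`.
-/

lemma stdNormalPdf_eq_gaussianPDFReal : stdNormalPdf = gaussianPDFReal 0 1 := by
  funext t
  simp [stdNormalPdf, gaussianPDFReal, neg_div]

lemma integrable_stdNormalPdf : Integrable stdNormalPdf :=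
  stdNormalPdf_eq_gaussianPDFReal ▸ integrable_gaussianPDFReal 0 1

lemma integral_Ioi_zero_stdNormalPdf : ∫ t in Ioi 0, stdNormalPdf t = 1 / 2 := by
  have hpdf : ∀ t, stdNormalPdf t = (Real.sqrt (2 * Real.pi))⁻¹ * Real.exp (-(1 / 2) * t ^ 2) :=
    fun t => by rw [stdNormalPdf, neg_div, neg_mul, one_div_mul_eq_div]
  simp_rw [hpdf, integral_const_mul, integral_gaussian_Ioi, div_div_eq_mul_div, div_one,
    mul_comm Real.pi]
  have hpi : (0 : ℝ) < Real.sqrt (2 * Real.pi) := by positivity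
  field_simp

lemma exp_neg_le_one_sub_add_sq_div_two {x : ℝ} (hx : 0 ≤ x) :
    Real.exp (-x) ≤ 1 - x + x ^ 2 / 2 := by
  have hcubic : 1 + x + x ^ 2 / 2 + x ^ 3 / 6 ≤ Real.exp x := by
    have := Real.sum_le_exp_of_nonneg hx 4
    norm_num [Finset.sum_range_succ, Nat.factorial] at this
    linarith
  rw [Real.exp_neg, inv_le_iff_one_le_mul₀ (Real.exp_pos x)]
  -- `(1 - x + x²/2) (1 + x + x²/2 + x³/6) = 1 + x³/6 + x⁴/12 + x⁵/12`
  have hq : 0 ≤ 1 - x + x ^ 2 / 2 := by nlinarith [sq_nonneg (x - 1)]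
  nlinarith [mul_le_mul_of_nonneg_left hcubic hq, pow_nonneg hx 3, pow_nonneg hx 4, pow_nonneg hx 5]

lemma intervalIntegral_stdNormalPdf_zero_one_le : ∫ t in (0 : ℝ)..1, stdNormalPdf t ≤ 0.35 := by
  have hpi : (2.5 : ℝ) ≤ Real.sqrt (2 * Real.pi) :=
    Real.le_sqrt_of_sq_le (by nlinarith [Real.pi_gt_d2])
  calc ∫ t in (0 : ℝ)..1, stdNormalPdf t
      ≤ ∫ t in (0 : ℝ)..1, (Real.sqrt (2 * Real.pi))⁻¹ * (1 - t ^ 2 / 2 + t ^ 4 / 8) := by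
        refine intervalIntegral.integral_mono_on zero_le_one
          integrable_stdNormalPdf.intervalIntegrable
          (Continuous.intervalIntegrable (by fun_prop) _ _) fun t _ => ?_
        refine mul_le_mul_of_nonneg_left ?_ (by positivity)
        have := exp_neg_le_one_sub_add_sq_div_two (by positivity : (0 : ℝ) ≤ t ^ 2 / 2)
        rw [neg_div]
        linarith
    _ = (Real.sqrt (2 * Real.pi))⁻¹ * (103 / 120) := by
        rw [intervalIntegral.integral_const_mul, intervalIntegral.integral_add,
          intervalIntegral.integral_sub, intervalIntegral.integral_div,
          intervalIntegral.integral_div]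
        · norm_num [integral_pow]
        all_goals exact Continuous.intervalIntegrable (by fun_prop) _ _
    _ ≤ 0.35 := by
        rw [inv_mul_le_iff₀ (by positivity)]
        linarith

lemma integral_Ioi_one_stdNormalPdf :
    ∫ t in Ioi 1, stdNormalPdf t = 1 / 2 - ∫ t in (0 : ℝ)..1, stdNormalPdf t := by
  rw [← integral_Ioi_zero_stdNormalPdf,
    ← intervalIntegral.integral_interval_add_Ioi (a := 0) (b := 1)
      integrable_stdNormalPdf.integrableOn integrable_stdNormalPdf.integrableOn]
  ring

lemma integral_Ioi_one_stdNormalPdf_ge : (0.15 : ℝ) ≤ ∫ t in Ioi 1, stdNormalPdf t := by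
  rw [integral_Ioi_one_stdNormalPdf]
  linarith [intervalIntegral_stdNormalPdf_zero_one_le]

lemma integral_Ioi_one_stdNormalPdf_le : ∫ t in Ioi 1, stdNormalPdf t ≤ 1 / 2 := by
  rw [integral_Ioi_one_stdNormalPdf, sub_le_self_iff]
  exact intervalIntegral.integral_nonneg zero_le_one fun t _ => by
    rw [stdNormalPdf]; positivity

section StdGaussian

variable {E : Type*} [NormedAddCommGroup E] [InnerProductSpace ℝ E] [FiniteDimensional ℝ E]
  [MeasurableSpace E] [BorelSpace E]

lemma map_innerSL_stdGaussian {e : E} (he : ‖e‖ = 1) :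
    (ProbabilityTheory.stdGaussian E).map (innerSL ℝ e) = gaussianReal 0 1 := by
  rw [IsGaussian.map_eq_gaussianReal, integral_strongDual_stdGaussian, variance_dual_stdGaussian,
    innerSL_apply_norm, he]
  simp

lemma stdGaussian_one_le_inner {e : E} (he : ‖e‖ = 1) :
    ProbabilityTheory.stdGaussian E {z | 1 ≤ ⟪e, z⟫} =
      ENNReal.ofReal (∫ t in Ioi 1, stdNormalPdf t) := by
  have hpre : {z : E | 1 ≤ ⟪e, z⟫} = innerSL ℝ e ⁻¹' Ici 1 := rfl
  rw [hpre, ← Measure.map_apply (by fun_prop) measurableSet_Ici, map_innerSL_stdGaussian he,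
    gaussianReal_apply_eq_integral _ one_ne_zero, ← stdNormalPdf_eq_gaussianPDFReal,
    integral_Ici_eq_integral_Ioi]

lemma ofReal_le_stdGaussian_inner_le_neg_norm (v : E) :
    ENNReal.ofReal (∫ t in Ioi 1, stdNormalPdf t) ≤
      ProbabilityTheory.stdGaussian E {z | ⟪v, z⟫ ≤ -‖v‖} := by
  rcases eq_or_ne v 0 with rfl | hv
  · simp only [inner_zero_left, norm_zero, neg_zero, le_refl, ofPred_true, measure_univ]
    exact ENNReal.ofReal_le_one.2 (integral_Ioi_one_stdNormalPdf_le.trans (by norm_num))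
  have hvpos : 0 < ‖v‖ := norm_pos_iff.2 hv
  have hset : {z : E | ⟪v, z⟫ ≤ -‖v‖} = {z | 1 ≤ ⟪(-‖v‖⁻¹) • v, z⟫} := by
    ext z
    rw [mem_ofPred_eq, mem_ofPred_eq, iff_comm, real_inner_smul_left, neg_mul, le_neg,
      inv_mul_le_iff₀ hvpos, mul_neg_one]
  rw [hset, stdGaussian_one_le_inner]
  rw [norm_smul, norm_neg, norm_inv, norm_norm, inv_mul_cancel₀ hvpos.ne']

end StdGaussian

lemma stdGaussian_eq_stdGaussian (d : ℕ) :
    _root_.stdGaussian d = ProbabilityTheory.stdGaussian (Ed d) :=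
  map_pi_eq_stdGaussian

instance : IsProbabilityMeasure unif01 := ⟨by simp [unif01]⟩

instance (d : ℕ) : IsProbabilityMeasure (_root_.stdGaussian d) :=
  stdGaussian_eq_stdGaussian d ▸ inferInstance

section Coupling

variable {h : ℝ} {b : Ed d → Ed d} {x y : Ed d}

lemma one_le_densRatio (hh : 0 < h) {xh yh z : Ed d} (hr : ‖xh - yh‖ ≤ 2 * Real.sqrt h)
    (hz : ⟪xh - yh, z⟫ ≤ -‖xh - yh‖) :
    1 ≤ densRatio h xh yh (xh + Real.sqrt h • z) := by
  set v := xh - yh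
  have hnum : ‖xh + Real.sqrt h • z - xh‖ ^ 2 - ‖xh + Real.sqrt h • z - yh‖ ^ 2 =
      -(‖v‖ ^ 2 + 2 * (Real.sqrt h * ⟪v, z⟫)) := by
    rw [add_sub_cancel_left, show xh + Real.sqrt h • z - yh = v + Real.sqrt h • z by
      simp only [v]; abel, norm_add_sq_real, real_inner_smul_right]
    ring
  rw [densRatio, Real.one_le_exp_iff, hnum]
  refine div_nonneg ?_ (by positivity)
  nlinarith [norm_nonneg v]

lemma measurable_cplMap : Measurable (cplMap h b x y) := by
  have hX : Continuous fun zu : Ed d × ℝ => hatPt h b x + Real.sqrt h • zu.1 := by fun_prop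
  have hcoupled : MeasurableSet {zu : Ed d × ℝ | zu.2 ≤
      densRatio h (hatPt h b x) (hatPt h b y) (hatPt h b x + Real.sqrt h • zu.1)} :=
    measurableSet_le measurable_snd (by unfold densRatio; fun_prop)
  have hrefl : Continuous fun zu : Ed d × ℝ => reflPt h (hatPt h b x) (hatPt h b y) zu.1 := by
    unfold reflPt; fun_prop
  exact hX.measurable.prodMk (Measurable.ite hcoupled hX.measurable hrefl.measurable)

instance : IsProbabilityMeasure (cplMeasure h b x y) :=
  Measure.isProbabilityMeasure_map measurable_cplMap.aemeasurable

lemma ofReal_le_cplMeasure_diag (hh : 0 < h)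
    (hr : ‖hatPt h b x - hatPt h b y‖ ≤ 2 * Real.sqrt h) :
    ENNReal.ofReal (∫ t in Ioi 1, stdNormalPdf t) ≤ cplMeasure h b x y {w | w.1 = w.2} := by
  set A := {z : Ed d | ⟪hatPt h b x - hatPt h b y, z⟫ ≤ -‖hatPt h b x - hatPt h b y‖}
  have hA : A ×ˢ Ioc 0 1 ⊆ cplMap h b x y ⁻¹' {w | w.1 = w.2} := by
    rintro ⟨z, u⟩ ⟨hz, hu⟩
    simp [cplMap, hu.2.trans (one_le_densRatio hh hr hz)]
  calc ENNReal.ofReal (∫ t in Ioi 1, stdNormalPdf t)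
      ≤ _root_.stdGaussian d A :=
        stdGaussian_eq_stdGaussian d ▸ ofReal_le_stdGaussian_inner_le_neg_norm _
    _ = ((_root_.stdGaussian d).prod unif01) (A ×ˢ Ioc 0 1) := by simp [Measure.prod_prod, unif01]
    _ ≤ ((_root_.stdGaussian d).prod unif01) (cplMap h b x y ⁻¹' {w | w.1 = w.2}) :=
        measure_mono hA
    _ ≤ cplMeasure h b x y {w | w.1 = w.2} :=
        Measure.le_map_apply measurable_cplMap.aemeasurable _

end Coupling

/-- Lemma 2.9 (iii): there is a universal constant `p₀ ∈ (0,1)`,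
`p₀ ≥ 0.15`, namely `p₀ = ∫₁^∞ φ_{0,1}(t)dt`, such that `π(x,y) ≥ p₀` whenever
`r̂ ≤ 2√h`, for the coupled Euler transition steps. -/
theorem stmt8 :
    ∃ p₀ : ℝ, p₀ ∈ Set.Ioo (0:ℝ) 1 ∧ 0.15 ≤ p₀ ∧
      p₀ = ∫ t in Set.Ioi (1:ℝ), stdNormalPdf t ∧
      ∀ d : ℕ, 1 ≤ d → ∀ h : ℝ, 0 < h → ∀ b : Ed d → Ed d, Measurable b →
      ∀ x y : Ed d, ‖hatPt h b x - hatPt h b y‖ ≤ 2 * Real.sqrt h →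
        p₀ ≤ piE h b x y := by
  refine ⟨_, ⟨(by norm_num : (0 : ℝ) < 0.15).trans_le integral_Ioi_one_stdNormalPdf_ge,
    integral_Ioi_one_stdNormalPdf_le.trans_lt (by norm_num)⟩,
    integral_Ioi_one_stdNormalPdf_ge, rfl, ?_⟩
  intro d _ h hh b _ x y hr
  exact (ENNReal.ofReal_le_iff_le_toReal (measure_ne_top _ _)).1 (ofReal_le_cplMeasure_diag hh hr)
end
end
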